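/- Class H is preserved by the dynamic programming recursion: if f and g belong to class H, then the value function V defined by V(w) = sup_{b ∈ ℝ} H(w, b) also belongs to class H. -/

import Mathlib

/-- `f` is affine on the set `s`. -/
def AffOn (f : ℝ → ℝ) (s : Set ℝ) : Prop := ∃ a c : ℝ, ∀ y ∈ s, f y = a * y + c

/-- Left derivative of `f` at `x`. -/
noncomputable def lDeriv (f : ℝ → ℝ) (x : ℝ) : ℝ := derivWithin f (Set.Iio x) x

/-- Right derivative of `f` at `x`. -/
noncomputable def rDeriv (f : ℝ → ℝ) (x : ℝ) : ℝ := derivWithin f (Set.Ioi x) x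

/-- `f` is piecewise affine with partition points `x 1 < x 2 < … < x N`
(no partition points if `N = 0`, in which case `f` is affine on all of `ℝ`). -/
def PWAff (f : ℝ → ℝ) (N : ℕ) (x : ℕ → ℝ) : Prop :=
  (∀ i, 1 ≤ i → i + 1 ≤ N → x i < x (i + 1)) ∧
  (N = 0 → AffOn f Set.univ) ∧
  (1 ≤ N → AffOn f (Set.Iic (x 1)) ∧ AffOn f (Set.Ici (x N)) ∧
    ∀ i, 1 ≤ i → i + 1 ≤ N → AffOn f (Set.Icc (x i) (x (i + 1))))

/-- `f` belongs to class `H` as witnessed by the points `x 1 < … < x N`: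
piecewise linear, concave on `ℝ`, and eventually constant. -/
def ClassHAux (f : ℝ → ℝ) (N : ℕ) (x : ℕ → ℝ) : Prop :=
  PWAff f N x ∧ ConcaveOn ℝ Set.univ f ∧ ∃ xb : ℝ, ∀ y, xb ≤ y → f y = f xb

/-- `f` belongs to class `H`. -/
def ClassH (f : ℝ → ℝ) : Prop := ∃ N x, ClassHAux f N x

/-- `x 1 < … < x N` are the singular values of the class-`H` function `f`:
they partition `ℝ` into pieces on which `f` is affine and each of them is a genuine
kink, i.e. the right derivative is strictly smaller than the left derivative there. -/
def HasSingVals (f : ℝ → ℝ) (N : ℕ) (x : ℕ → ℝ) : Prop :=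
  ClassHAux f N x ∧ ∀ i, 1 ≤ i → i ≤ N → rDeriv f (x i) < lDeriv f (x i)

/-- The dynamic-programming objective
`H(w,b) = R⁻¹ (p f(wR + b(u−R)) + (1−p) g(wR + b(d−R)))`. -/
noncomputable def Hfun (R u d p : ℝ) (f g : ℝ → ℝ) (w b : ℝ) : ℝ :=
  R⁻¹ * (p * f (w * R + b * (u - R)) + (1 - p) * g (w * R + b * (d - R)))

/-- The value function `V(w) = sup_b H(w,b)`. -/
noncomputable def Vfun (R u d p : ℝ) (f g : ℝ → ℝ) (w : ℝ) : ℝ :=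
  ⨆ b : ℝ, Hfun R u d p f g w b

/-- The set of maximizers `B(w) = {b : H(w,b) = V(w)}`. -/
noncomputable def Bset (R u d p : ℝ) (f g : ℝ → ℝ) (w : ℝ) : Set ℝ :=
  {b : ℝ | Hfun R u d p f g w b = Vfun R u d p f g w}

/-- The minimal optimal strategy `β(w) = min B(w)`. -/
noncomputable def betaFun (R u d p : ℝ) (f g : ℝ → ℝ) (w : ℝ) : ℝ :=
  sInf (Bset R u d p f g w)

/-- The grid line `C^u = {(w,b) : wR + b(u−R) = c}`. -/
def Cu (R u : ℝ) (c : ℝ) : Set (ℝ × ℝ) := {pt | pt.1 * R + pt.2 * (u - R) = c}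

/-- The grid line `C^d = {(w,b) : wR + b(d−R) = c}`. -/
def Cd (R d : ℝ) (c : ℝ) : Set (ℝ × ℝ) := {pt | pt.1 * R + pt.2 * (d - R) = c}

/-- The grid `G`, the union of the lines `C^u_i`, `1 ≤ i ≤ Nu`, and `C^d_j`, `1 ≤ j ≤ Nd`. -/
def Grid (R u d : ℝ) (Nu : ℕ) (xu : ℕ → ℝ) (Nd : ℕ) (xd : ℕ → ℝ) : Set (ℝ × ℝ) :=
  (⋃ i ∈ Finset.Icc 1 Nu, Cu R u (xu i)) ∪ (⋃ j ∈ Finset.Icc 1 Nd, Cd R d (xd j))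

/-- The open parallelogram `D_ij`, for `0 ≤ i ≤ Nu`, `0 ≤ j ≤ Nd`, with the conventions
`x^u_0 = x^d_0 = −∞` and `x^u_{Nu+1} = x^d_{Nd+1} = +∞`. -/
def Dset (R u d : ℝ) (Nu : ℕ) (xu : ℕ → ℝ) (Nd : ℕ) (xd : ℕ → ℝ) (i j : ℕ) : Set (ℝ × ℝ) :=
  {pt | (1 ≤ i → xu i < pt.1 * R + pt.2 * (u - R)) ∧
        (i < Nu → pt.1 * R + pt.2 * (u - R) < xu (i + 1)) ∧
        (1 ≤ j → xd j < pt.1 * R + pt.2 * (d - R)) ∧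
        (j < Nd → pt.1 * R + pt.2 * (d - R) < xd (j + 1))}

/-!
A class-`H` function is concave, monotone (being eventually constant), and at every point affine
on a right and on a left neighbourhood, with slopes from a fixed finite set. For fixed `w` the map
`b ↦ H(w, b)` is therefore maximised at some `b*`, and the first-order conditions there make the
intervals of weighted one-sided slopes `p (u - R) [f'₊, f'₋]` and `(1 - p) (R - d) [g'₊, g'₋]`
overlap. A common value `ξ`, one of finitely many weighted slopes, gives supergradients of `f` and
`g` at the two arguments whose combination is a supergradient of `V` at `w`, of slope
`ξ / (u - R) + ξ / (R - d)`. A function with supergradients from a finite set everywhere is the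
lower envelope of finitely many lines, hence concave and affine between consecutive crossing
points; as `V` is also eventually constant, it is in class `H`.
-/

open Set Filter Topology

def RightAffineAt (f : ℝ → ℝ) (s r : ℝ) : Prop := ∀ᶠ z in 𝓝[≥] s, f z = f s + r * (z - s)

def LeftAffineAt (f : ℝ → ℝ) (s l : ℝ) : Prop := ∀ᶠ z in 𝓝[≤] s, f z = f s + l * (z - s)

section Concave

variable {f : ℝ → ℝ}

theorem ConcaveOn.sub_mul_add_sub_mul_le (hf : ConcaveOn ℝ univ f) {x y z : ℝ} (hxy : x < y)
    (hyz : y < z) : (z - y) * f x + (y - x) * f z ≤ (z - x) * f y := by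
  have h := hf.slope_anti_adjacent (mem_univ x) (mem_univ z) hxy hyz
  rw [div_le_div_iff₀ (sub_pos.2 hyz) (sub_pos.2 hxy)] at h
  linear_combination h

theorem ConcaveOn.monotone_of_eventually_const (hf : ConcaveOn ℝ univ f) {xb : ℝ}
    (hxb : ∀ y, xb ≤ y → f y = f xb) : Monotone f := by
  intro y z hyz
  rcases hyz.eq_or_lt with rfl | hyz
  · rfl
  set w := max z xb + 1
  have hzw : z < w := by linarith [le_max_left z xb]
  have hxw : xb ≤ w := by linarith [le_max_right z xb]
  have h₁ := hf.slope_anti_adjacent (mem_univ y) (mem_univ w) hyz hzw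
  have h₂ := hf.slope_anti_adjacent (mem_univ z) (mem_univ (w + 1)) hzw (lt_add_one w)
  rw [hxb (w + 1) (by linarith), hxb w hxw, sub_self, zero_div] at h₂
  rw [hxb w hxw] at h₁
  have := (le_div_iff₀ (sub_pos.2 hyz)).1 (h₂.trans h₁)
  linarith

theorem ConcaveOn.le_of_rightAffineAt (hf : ConcaveOn ℝ univ f) {s r y : ℝ}
    (hr : RightAffineAt f s r) (hy : s ≤ y) : f y ≤ f s + r * (y - s) := by
  rcases hy.eq_or_lt with rfl | hsy
  · simp
  obtain ⟨z, hz, hzs, hzy⟩ :=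
    ((hr.filter_mono (nhdsWithin_mono _ Ioi_subset_Ici_self)).and (Ioo_mem_nhdsGT hsy)).exists
  have h := hf.sub_mul_add_sub_mul_le hzs hzy
  rw [hz] at h
  nlinarith

theorem ConcaveOn.le_of_leftAffineAt (hf : ConcaveOn ℝ univ f) {s l y : ℝ}
    (hl : LeftAffineAt f s l) (hy : y ≤ s) : f y ≤ f s + l * (y - s) := by
  rcases hy.eq_or_lt with rfl | hys
  · simp
  obtain ⟨z, hz, hyz, hzs⟩ :=
    ((hl.filter_mono (nhdsWithin_mono _ Iio_subset_Iic_self)).and (Ioo_mem_nhdsLT hys)).exists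
  have h := hf.sub_mul_add_sub_mul_le hyz hzs
  rw [hz] at h
  nlinarith

theorem ConcaveOn.rightSlope_le_leftSlope (hf : ConcaveOn ℝ univ f) {s r l : ℝ}
    (hr : RightAffineAt f s r) (hl : LeftAffineAt f s l) : r ≤ l := by
  obtain ⟨z₁, hz₁, hz₁s⟩ :=
    ((hl.filter_mono (nhdsWithin_mono _ Iio_subset_Iic_self)).and self_mem_nhdsWithin).exists
  obtain ⟨z₂, hz₂, hz₂s⟩ :=
    ((hr.filter_mono (nhdsWithin_mono _ Ioi_subset_Ici_self)).and self_mem_nhdsWithin).exists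
  have h := hf.sub_mul_add_sub_mul_le (mem_Iio.1 hz₁s) (mem_Ioi.1 hz₂s)
  rw [hz₁, hz₂] at h
  have hpos : 0 < (z₂ - s) * (s - z₁) := mul_pos (sub_pos.2 hz₂s) (sub_pos.2 hz₁s)
  nlinarith

theorem ConcaveOn.le_of_mem_Icc_slopes (hf : ConcaveOn ℝ univ f) {s r l q : ℝ}
    (hr : RightAffineAt f s r) (hl : LeftAffineAt f s l) (hq : q ∈ Icc r l) (y : ℝ) :
    f y ≤ f s + q * (y - s) := by
  rcases le_total s y with hy | hy
  · nlinarith [hf.le_of_rightAffineAt hr hy, hq.1]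
  · nlinarith [hf.le_of_leftAffineAt hl hy, hq.2]

theorem concaveOn_univ_of_supergradient {h : ℝ → ℝ}
    (hσ : ∀ w, ∃ σ, ∀ v, h v ≤ h w + σ * (v - w)) : ConcaveOn ℝ univ h := by
  refine ⟨convex_univ, fun v _ z _ a b ha hb hab => ?_⟩
  obtain ⟨σ, hσ⟩ := hσ (a • v + b • z)
  simp only [smul_eq_mul] at hσ ⊢
  have h₁ := mul_le_mul_of_nonneg_left (hσ v) ha
  have h₂ := mul_le_mul_of_nonneg_left (hσ z) hb
  linear_combination h₁ + h₂ + (h (a * v + b * z) - σ * (a * v + b * z)) * hab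

theorem RightAffineAt.mul_le_of_isMax {F G : ℝ → ℝ} {s t r l α γ P Q : ℝ}
    (hF : RightAffineAt F s r) (hG : LeftAffineAt G t l) (hα : 0 < α) (hγ : 0 < γ)
    (hmax : ∀ ε > 0, P * F (s + ε * α) + Q * G (t - ε * γ) ≤ P * F s + Q * G t) :
    P * r * α ≤ Q * l * γ := by
  have hs : Tendsto (fun ε => s + ε * α) (𝓝[>] 0) (𝓝[≥] s) :=
    tendsto_nhdsWithin_iff.2 ⟨((continuous_const.add (continuous_id.mul continuous_const)).tendsto'
      0 s (by simp)).mono_left nhdsWithin_le_nhds,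
      eventually_nhdsWithin_of_forall fun ε hε => by
        simpa using mul_nonneg (le_of_lt hε) hα.le⟩
  have ht : Tendsto (fun ε => t - ε * γ) (𝓝[>] 0) (𝓝[≤] t) :=
    tendsto_nhdsWithin_iff.2 ⟨((continuous_const.sub (continuous_id.mul continuous_const)).tendsto'
      0 t (by simp)).mono_left nhdsWithin_le_nhds,
      eventually_nhdsWithin_of_forall fun ε hε => by
        simpa using mul_nonneg (le_of_lt hε) hγ.le⟩
  obtain ⟨ε, ⟨hFε, hGε⟩, hε⟩ :=
    (((hs.eventually hF).and (ht.eventually hG)).and self_mem_nhdsWithin).exists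
  have h := hmax ε hε
  rw [hFε, hGε] at h
  refine le_of_mul_le_mul_left ?_ (mem_Ioi.1 hε)
  linear_combination h

end Concave

section Cover

theorem exists_mem_Icc_consecutive {α : Type*} [LinearOrder α] (x : ℕ → α) {n : ℕ} (hn : 1 ≤ n)
    {y : α} (h₁ : x 1 < y) (hn' : y ≤ x n) : ∃ i, 1 ≤ i ∧ i < n ∧ y ∈ Icc (x i) (x (i + 1)) := by
  induction n, hn using Nat.le_induction with
  | base => exact absurd hn' (not_le.2 h₁)
  | succ n hn ih =>
    rcases le_or_gt y (x n) with h | h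
    · obtain ⟨i, hi, hin, hy⟩ := ih h
      exact ⟨i, hi, by omega, hy⟩
    · exact ⟨n, hn, by omega, h.le, hn'⟩

theorem PWAff.exists_closed_cover {f : ℝ → ℝ} {N : ℕ} {x : ℕ → ℝ} (hf : PWAff f N x) :
    ∃ T : Finset (Set ℝ), (∀ J ∈ T, IsClosed J ∧ J.OrdConnected ∧ AffOn f J) ∧
      ∀ y, ∃ J ∈ T, y ∈ J := by
  classical
  obtain ⟨-, hzero, hpos⟩ := hf
  rcases Nat.eq_zero_or_pos N with rfl | hN
  · refine ⟨{univ}, fun J hJ => ?_, fun y => ⟨univ, Finset.mem_singleton_self _, mem_univ y⟩⟩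
    rw [Finset.mem_singleton.1 hJ]
    exact ⟨isClosed_univ, ordConnected_univ, hzero rfl⟩
  obtain ⟨hleft, hright, hmid⟩ := hpos hN
  refine ⟨insert (Iic (x 1)) (insert (Ici (x N))
    ((Finset.Ico 1 N).image fun i => Icc (x i) (x (i + 1)))), ?_, fun y => ?_⟩
  · simp only [Finset.mem_insert, Finset.mem_image, Finset.mem_Ico]
    rintro J (rfl | rfl | ⟨i, ⟨hi, hiN⟩, rfl⟩)
    · exact ⟨isClosed_Iic, ordConnected_Iic, hleft⟩
    · exact ⟨isClosed_Ici, ordConnected_Ici, hright⟩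
    · exact ⟨isClosed_Icc, ordConnected_Icc, hmid i hi hiN⟩
  rcases le_or_gt y (x 1) with hy | hy
  · exact ⟨Iic (x 1), by simp, hy⟩
  rcases le_or_gt (x N) y with hy' | hy'
  · exact ⟨Ici (x N), by simp, hy'⟩
  obtain ⟨i, hi, hiN, hyi⟩ := exists_mem_Icc_consecutive x hN hy hy'.le
  refine ⟨Icc (x i) (x (i + 1)), ?_, hyi⟩
  simp only [Finset.mem_insert, Finset.mem_image, Finset.mem_Ico]
  exact Or.inr (Or.inr ⟨i, ⟨hi, hiN⟩, rfl⟩)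

theorem exists_frequently_mem_of_finite_closed_cover {X : Type*} [TopologicalSpace X]
    {T : Finset (Set X)} (hT : ∀ J ∈ T, IsClosed J) (hcover : ∀ y, ∃ J ∈ T, y ∈ J)
    {l : Filter X} [l.NeBot] {s : X} (hl : l ≤ 𝓝 s) : ∃ J ∈ T, s ∈ J ∧ ∃ᶠ y in l, y ∈ J := by
  by_contra! h
  have hout : ∀ J ∈ T, ∀ᶠ y in l, y ∉ J := fun J hJ => by
    by_cases hs : s ∈ J
    · exact h J hJ hs
    · exact hl ((hT J hJ).isOpen_compl.mem_nhds hs)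
  obtain ⟨y, hy⟩ := ((eventually_all_finset T).2 hout).exists
  obtain ⟨J, hJ, hyJ⟩ := hcover y
  exact hy J hJ hyJ

theorem exists_finset_oneSided_slopes_of_closed_cover {f : ℝ → ℝ} {T : Finset (Set ℝ)}
    (hT : ∀ J ∈ T, IsClosed J ∧ J.OrdConnected ∧ AffOn f J) (hcover : ∀ y, ∃ J ∈ T, y ∈ J) :
    ∃ A : Finset ℝ, ∀ s, (∃ r ∈ A, RightAffineAt f s r) ∧ ∃ l ∈ A, LeftAffineAt f s l := by
  classical
  choose! a c hac using fun J hJ => (hT J hJ).2.2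
  have affineNear : ∀ J ∈ T, ∀ s ∈ J, ∀ l : Filter ℝ, J ∈ l →
      ∀ᶠ z in l, f z = f s + a J * (z - s) := fun J hJ s hs l hl =>
    mem_of_superset hl fun z hz => show f z = f s + a J * (z - s) by
      rw [hac J hJ z hz, hac J hJ s hs]
      ring
  have hclosed : ∀ J ∈ T, IsClosed J := fun J hJ => (hT J hJ).1
  refine ⟨T.image a, fun s => ⟨?_, ?_⟩⟩
  · obtain ⟨J, hJ, hsJ, hfreq⟩ :=
      exists_frequently_mem_of_finite_closed_cover hclosed hcover (l := 𝓝[>] s) nhdsWithin_le_nhds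
    obtain ⟨y, hyJ, hsy⟩ := (hfreq.and_eventually self_mem_nhdsWithin).exists
    exact ⟨a J, Finset.mem_image_of_mem a hJ,
      affineNear J hJ s hsJ _ ((hT J hJ).2.1.mem_nhdsGE hsJ hyJ hsy)⟩
  · obtain ⟨J, hJ, hsJ, hfreq⟩ :=
      exists_frequently_mem_of_finite_closed_cover hclosed hcover (l := 𝓝[<] s) nhdsWithin_le_nhds
    obtain ⟨y, hyJ, hys⟩ := (hfreq.and_eventually self_mem_nhdsWithin).exists
    exact ⟨a J, Finset.mem_image_of_mem a hJ,
      affineNear J hJ s hsJ _ ((hT J hJ).2.1.mem_nhdsLE hyJ hsJ hys)⟩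

end Cover

section LowerEnvelope

theorem Finset.exists_strictMonoOn_enum {α : Type*} [LinearOrder α] [Inhabited α]
    (S : Finset α) : ∃ x : ℕ → α, StrictMonoOn x (Set.Icc 1 S.card) ∧
      ∀ c ∈ S, ∃ i ∈ Set.Icc 1 S.card, x i = c := by
  refine ⟨fun i => if h : i - 1 < S.card then S.orderEmbOfFin rfl ⟨i - 1, h⟩ else default,
    fun i hi j hj hij => ?_, fun c hc => ?_⟩
  · simp only [Set.mem_Icc] at hi hj
    simp only [dif_pos (show i - 1 < S.card by omega), dif_pos (show j - 1 < S.card by omega)]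
    exact (S.orderEmbOfFin rfl).strictMono (Fin.mk_lt_mk.2 (by omega))
  · rw [← Finset.mem_coe, ← Finset.range_orderEmbOfFin S rfl] at hc
    obtain ⟨⟨j, hj⟩, rfl⟩ := hc
    exact ⟨j + 1, ⟨by omega, by omega⟩, by simp [hj]⟩

theorem exists_pwAff_of_affine_off_finset {h : ℝ → ℝ} (S : Finset ℝ)
    (hS : ∀ m ∉ S, ∃ a c, ∀ w, (∀ x ∈ S, x ∉ uIoo m w) → h w = a * w + c) :
    ∃ N x, PWAff h N x := by
  obtain ⟨x, hmono, hx⟩ := S.exists_strictMonoOn_enum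
  have affOn : ∀ T : Set ℝ, ∀ m ∉ S, (∀ w ∈ T, ∀ c ∈ S, c ∉ uIoo m w) → AffOn h T :=
    fun T m hm hT => let ⟨a, c, hac⟩ := hS m hm; ⟨a, c, fun w hw => hac w (hT w hw)⟩
  refine ⟨S.card, x, fun i hi hiN => hmono ⟨hi, by omega⟩ ⟨by omega, hiN⟩ (lt_add_one i),
    fun h0 => ?_, fun hN => ?_⟩
  · rw [Finset.card_eq_zero] at h0
    subst h0
    exact affOn univ 0 (Finset.notMem_empty 0) (by simp)
  have hbounds : ∀ c ∈ S, x 1 ≤ c ∧ c ≤ x S.card := fun c hc => by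
    obtain ⟨j, hj, rfl⟩ := hx c hc
    exact ⟨hmono.monotoneOn ⟨le_rfl, hN⟩ hj hj.1, hmono.monotoneOn hj ⟨hN, le_rfl⟩ hj.2⟩
  have hgap : ∀ i, 1 ≤ i → i + 1 ≤ S.card → ∀ c ∈ S, c ∉ Ioo (x i) (x (i + 1)) := by
    rintro i hi hiN c hc ⟨hic, hci⟩
    obtain ⟨j, hj, rfl⟩ := hx c hc
    have := (hmono.lt_iff_lt ⟨hi, by omega⟩ hj).1 hic
    have := (hmono.lt_iff_lt hj ⟨by omega, hiN⟩).1 hci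
    omega
  refine ⟨affOn _ (x 1 - 1) (fun hm => by linarith [(hbounds _ hm).1]) ?_,
    affOn _ (x S.card + 1) (fun hm => by linarith [(hbounds _ hm).2]) ?_,
    fun i hi hiN => affOn _ ((x i + x (i + 1)) / 2) (fun hm => hgap i hi hiN _ hm ?_) ?_⟩
  · intro w hw c hc hcw
    simp only [uIoo, mem_Ioo, inf_lt_iff, lt_sup_iff] at hcw
    have := (hbounds c hc).1
    rcases hcw.2 with h | h <;> linarith [mem_Iic.1 hw]
  · intro w hw c hc hcw
    simp only [uIoo, mem_Ioo, inf_lt_iff, lt_sup_iff] at hcw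
    have := (hbounds c hc).2
    rcases hcw.1 with h | h <;> linarith [mem_Ici.1 hw]
  · have := hmono ⟨hi, by omega⟩ ⟨by omega, hiN⟩ (lt_add_one i)
    constructor <;> linarith
  · intro w hw c hc hcw
    simp only [uIoo, mem_Ioo, inf_lt_iff, lt_sup_iff] at hcw
    obtain ⟨hw₁, hw₂⟩ := hw
    refine hgap i hi hiN c hc ⟨?_, ?_⟩
    · rcases hcw.1 with h | h <;> linarith
    · rcases hcw.2 with h | h <;> linarith

theorem crossing_eq_or_mem_uIoo {a b c d m w : ℝ} (hm : a * m + b ≤ c * m + d)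
    (hw : c * w + d < a * w + b) : (d - b) / (a - c) = m ∨ (d - b) / (a - c) ∈ uIoo m w := by
  have hac : a - c ≠ 0 := fun h => by
    rw [sub_eq_zero.1 h] at hm hw
    linarith
  set x₀ := (d - b) / (a - c)
  have hx₀ : (a - c) * x₀ = d - b := mul_div_cancel₀ _ hac
  rcases eq_or_ne x₀ m with h | hne
  · exact Or.inl h
  right
  rcases hac.lt_or_gt with hneg | hpos
  · have hmx : x₀ < m := lt_of_le_of_ne (by nlinarith) hne
    have hwx : w < x₀ := by nlinarith
    rw [uIoo_of_ge (hwx.trans hmx).le]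
    exact ⟨hwx, hmx⟩
  · have hmx : m < x₀ := lt_of_le_of_ne (by nlinarith) hne.symm
    have hwx : x₀ < w := by nlinarith
    rw [uIoo_of_le (hmx.trans hwx).le]
    exact ⟨hmx, hwx⟩

theorem exists_pwAff_of_lowerEnvelope {h : ℝ → ℝ} {Y : Finset ℝ} {B : ℝ → ℝ}
    (hle : ∀ σ ∈ Y, ∀ v, h v ≤ σ * v + B σ) (htight : ∀ v, ∃ σ ∈ Y, h v = σ * v + B σ) :
    ∃ N x, PWAff h N x := by
  classical
  -- pairs of equal slopes only add the junk breakpoint `x / 0 = 0`, which is harmless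
  refine exists_pwAff_of_affine_off_finset
    ((Y ×ˢ Y).image fun kl => (B kl.2 - B kl.1) / (kl.1 - kl.2)) fun m hm => ?_
  obtain ⟨k, hk, hkm⟩ := htight m
  refine ⟨k, B k, fun w hw => (hle k hk w).antisymm ?_⟩
  by_contra! hlt
  obtain ⟨l, hl, hlw⟩ := htight w
  have hmem : (B l - B k) / (k - l) ∈ (Y ×ˢ Y).image fun kl => (B kl.2 - B kl.1) / (kl.1 - kl.2) :=
    Finset.mem_image.2 ⟨(k, l), Finset.mem_product.2 ⟨hk, hl⟩, rfl⟩
  rcases crossing_eq_or_mem_uIoo (hkm ▸ hle l hl m) (hlw ▸ hlt) with h | h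
  · exact hm (h ▸ hmem)
  · exact hw _ hmem h

theorem classH_of_finite_supergradients {h : ℝ → ℝ} (Y : Finset ℝ)
    (hY : ∀ w, ∃ σ ∈ Y, ∀ v, h v ≤ h w + σ * (v - w))
    (hconst : ∃ xb, ∀ y, xb ≤ y → h y = h xb) : ClassH h := by
  classical
  -- `B σ` is the least intercept of a line of slope `σ` above `h`; slopes admitting no such line
  -- (for which `⨆` is junk) are filtered out
  set B : ℝ → ℝ := fun σ => ⨆ v, h v - σ * v
  set Y' := Y.filter fun σ => BddAbove (range fun v => h v - σ * v)
  have hle : ∀ σ ∈ Y', ∀ v, h v ≤ σ * v + B σ := fun σ hσ v => by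
    have := le_ciSup (Finset.mem_filter.1 hσ).2 v
    linarith
  have htight : ∀ v, ∃ σ ∈ Y', h v = σ * v + B σ := by
    intro v
    obtain ⟨σ, hσY, hσ⟩ := hY v
    have hbdd : BddAbove (range fun v' => h v' - σ * v') :=
      ⟨h v - σ * v, by rintro _ ⟨v', rfl⟩; linarith [hσ v']⟩
    have hmem : σ ∈ Y' := Finset.mem_filter.2 ⟨hσY, hbdd⟩
    have hB : B σ ≤ h v - σ * v := ciSup_le fun v' => by linarith [hσ v']
    exact ⟨σ, hmem, le_antisymm (hle σ hmem v) (by linarith)⟩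
  obtain ⟨N, x, hpw⟩ := exists_pwAff_of_lowerEnvelope hle htight
  exact ⟨N, x, hpw, concaveOn_univ_of_supergradient fun w =>
    let ⟨σ, _, hσ⟩ := hY w; ⟨σ, hσ⟩, hconst⟩

end LowerEnvelope

namespace ClassH

variable {f : ℝ → ℝ}

theorem concaveOn (hf : ClassH f) : ConcaveOn ℝ univ f :=
  let ⟨_, _, _, hconc, _⟩ := hf; hconc

theorem exists_eventually_const (hf : ClassH f) : ∃ xb, ∀ y, xb ≤ y → f y = f xb :=
  let ⟨_, _, _, _, hconst⟩ := hf; hconst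

theorem monotone (hf : ClassH f) : Monotone f :=
  let ⟨_, hxb⟩ := hf.exists_eventually_const; hf.concaveOn.monotone_of_eventually_const hxb

theorem continuous (hf : ClassH f) : Continuous f :=
  continuousOn_univ.1 (hf.concaveOn.continuousOn isOpen_univ)

theorem exists_finset_oneSided_slopes (hf : ClassH f) :
    ∃ A : Finset ℝ, ∀ s, (∃ r ∈ A, RightAffineAt f s r) ∧ ∃ l ∈ A, LeftAffineAt f s l :=
  let ⟨_, _, hpw, _⟩ := hf
  let ⟨_, hT, hcover⟩ := hpw.exists_closed_cover
  exists_finset_oneSided_slopes_of_closed_cover hT hcover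

end ClassH

theorem Continuous.exists_forall_ge_of_le_outside_Icc {φ : ℝ → ℝ} (hφ : Continuous φ)
    {a c : ℝ} (hac : a ≤ c) (hlo : ∀ b ≤ a, φ b ≤ φ a) (hhi : ∀ b, c ≤ b → φ b ≤ φ c) :
    ∃ bs, ∀ b, φ b ≤ φ bs := by
  obtain ⟨bs, -, hbs⟩ := isCompact_Icc.exists_isMaxOn (nonempty_Icc.2 hac) hφ.continuousOn
  refine ⟨bs, fun b => ?_⟩
  rcases le_total b a with h | h
  · exact (hlo b h).trans (hbs ⟨le_rfl, hac⟩)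
  rcases le_total c b with h' | h'
  · exact (hhi b h').trans (hbs ⟨hac, le_rfl⟩)
  · exact hbs ⟨h, h'⟩

section DynamicProgramming

variable {R u d p : ℝ} {f g : ℝ → ℝ}

theorem Hfun_le_Hfun (hR : 0 < R) (hp0 : 0 ≤ p) (hp1 : p ≤ 1) {w b b' : ℝ}
    (hf : f (w * R + b * (u - R)) ≤ f (w * R + b' * (u - R)))
    (hg : g (w * R + b * (d - R)) ≤ g (w * R + b' * (d - R))) :
    Hfun R u d p f g w b ≤ Hfun R u d p f g w b' := by
  unfold Hfun
  have : 0 ≤ 1 - p := sub_nonneg.2 hp1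
  gcongr

theorem Vfun_eq_of_isMax {w bs : ℝ} (hbs : ∀ b, Hfun R u d p f g w b ≤ Hfun R u d p f g w bs) :
    Vfun R u d p f g w = Hfun R u d p f g w bs :=
  le_antisymm (ciSup_le hbs) (le_ciSup ⟨_, forall_mem_range.2 hbs⟩ bs)

theorem exists_isMax_Hfun (hR : 0 < R) (hdR : d < R) (hRu : R < u) (hp0 : 0 ≤ p) (hp1 : p ≤ 1)
    (hf : ClassH f) (hg : ClassH g) (w : ℝ) :
    ∃ bs, ∀ b, Hfun R u d p f g w b ≤ Hfun R u d p f g w bs := by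
  obtain ⟨xf, hxf⟩ := hf.exists_eventually_const
  obtain ⟨xg, hxg⟩ := hg.exists_eventually_const
  have huR : 0 < u - R := sub_pos.2 hRu
  have hdR' : d - R < 0 := sub_neg.2 hdR
  set b₀ := (xg - w * R) / (d - R)
  set b₁ := (xf - w * R) / (u - R)
  have hs : ∀ {b b'}, b ≤ b' → w * R + b * (u - R) ≤ w * R + b' * (u - R) := fun h => by
    nlinarith
  have ht : ∀ {b b'}, b ≤ b' → w * R + b' * (d - R) ≤ w * R + b * (d - R) := fun h => by
    nlinarith
  have hxf' : ∀ {b}, b₁ ≤ b → xf ≤ w * R + b * (u - R) := fun h => by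
    have := hs h
    rwa [div_mul_cancel₀ _ huR.ne', add_sub_cancel] at this
  have hxg' : ∀ {b}, b ≤ b₀ → xg ≤ w * R + b * (d - R) := fun h => by
    have := ht h
    rwa [div_mul_cancel₀ _ hdR'.ne, add_sub_cancel] at this
  have hcont : Continuous (Hfun R u d p f g w) := by
    have := hf.continuous
    have := hg.continuous
    unfold Hfun
    fun_prop
  refine hcont.exists_forall_ge_of_le_outside_Icc (min_le_max (a := b₀) (b := b₁))
    (fun b hb => Hfun_le_Hfun hR hp0 hp1 (hf.monotone (hs hb)) ?_)
    (fun b hb => Hfun_le_Hfun hR hp0 hp1 ?_ (hg.monotone (ht hb)))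
  · rw [hxg _ (hxg' (hb.trans (min_le_left _ _))), hxg _ (hxg' (min_le_left _ _))]
  · rw [hxf _ (hxf' ((le_max_right _ _).trans hb)), hxf _ (hxf' (le_max_right _ _))]

theorem Hfun_le_of_supergradients (hR : 0 < R) (hp0 : 0 ≤ p) (hp1 : p ≤ 1) {w bs qf qg : ℝ}
    (hqf : ∀ y, f y ≤ f (w * R + bs * (u - R)) + qf * (y - (w * R + bs * (u - R))))
    (hqg : ∀ y, g y ≤ g (w * R + bs * (d - R)) + qg * (y - (w * R + bs * (d - R))))
    (hbal : p * qf * (u - R) = (1 - p) * qg * (R - d)) (v b : ℝ) :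
    Hfun R u d p f g v b ≤ Hfun R u d p f g w bs + (p * qf + (1 - p) * qg) * (v - w) := by
  unfold Hfun
  have h₁ := mul_le_mul_of_nonneg_left (hqf (v * R + b * (u - R))) hp0
  have h₂ := mul_le_mul_of_nonneg_left (hqg (v * R + b * (d - R))) (sub_nonneg.2 hp1)
  refine (mul_le_mul_of_nonneg_left (add_le_add h₁ h₂) (inv_nonneg.2 hR.le)).trans_eq ?_
  -- the balance condition makes the terms in `b - bs` cancel
  field_simp
  linear_combination (b - bs) * hbal

theorem slope_balance_of_isMax (hdR : d < R) (hRu : R < u) (hR : 0 < R) {w bs rf lf rg lg : ℝ}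
    (hbs : ∀ b, Hfun R u d p f g w b ≤ Hfun R u d p f g w bs)
    (hrf : RightAffineAt f (w * R + bs * (u - R)) rf)
    (hlf : LeftAffineAt f (w * R + bs * (u - R)) lf)
    (hrg : RightAffineAt g (w * R + bs * (d - R)) rg)
    (hlg : LeftAffineAt g (w * R + bs * (d - R)) lg) :
    p * rf * (u - R) ≤ (1 - p) * lg * (R - d) ∧ (1 - p) * rg * (R - d) ≤ p * lf * (u - R) := by
  set s := w * R + bs * (u - R)
  set t := w * R + bs * (d - R)
  have huR : 0 < u - R := sub_pos.2 hRu
  have hRd : 0 < R - d := sub_pos.2 hdR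
  have hperturb : ∀ ε, p * f (s + ε * (u - R)) + (1 - p) * g (t - ε * (R - d)) ≤
      p * f s + (1 - p) * g t := fun ε => by
    have h := hbs (bs + ε)
    unfold Hfun at h
    rw [show w * R + (bs + ε) * (u - R) = s + ε * (u - R) by ring,
      show w * R + (bs + ε) * (d - R) = t - ε * (R - d) by ring] at h
    exact le_of_mul_le_mul_left h (inv_pos.2 hR)
  refine ⟨hrf.mul_le_of_isMax hlg huR hRd fun ε _ => hperturb ε,
    hrg.mul_le_of_isMax hlf hRd huR fun ε _ => ?_⟩
  have h := hperturb (-ε)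
  rw [show s + -ε * (u - R) = s - ε * (u - R) by ring,
    show t - -ε * (R - d) = t + ε * (R - d) by ring] at h
  linarith

theorem exists_supergradients_of_isMax (hdR : d < R) (hRu : R < u) (hR : 0 < R) (hp0 : 0 < p)
    (hp1 : p < 1) (hfc : ConcaveOn ℝ univ f) (hgc : ConcaveOn ℝ univ g) {Af Ag : Finset ℝ}
    (hAf : ∀ s, (∃ r ∈ Af, RightAffineAt f s r) ∧ ∃ l ∈ Af, LeftAffineAt f s l)
    (hAg : ∀ t, (∃ r ∈ Ag, RightAffineAt g t r) ∧ ∃ l ∈ Ag, LeftAffineAt g t l) {w bs : ℝ}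
    (hbs : ∀ b, Hfun R u d p f g w b ≤ Hfun R u d p f g w bs) :
    ∃ ξ ∈ Af.image (p * (u - R) * ·) ∪ Ag.image ((1 - p) * (R - d) * ·),
      (∀ y, f y ≤ f (w * R + bs * (u - R)) + ξ / (p * (u - R)) * (y - (w * R + bs * (u - R)))) ∧
      ∀ y, g y ≤ g (w * R + bs * (d - R)) + ξ / ((1 - p) * (R - d)) *
        (y - (w * R + bs * (d - R))) := by
  obtain ⟨⟨rf, hrfA, hrf⟩, lf, -, hlf⟩ := hAf (w * R + bs * (u - R))
  obtain ⟨⟨rg, hrgA, hrg⟩, lg, -, hlg⟩ := hAg (w * R + bs * (d - R))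
  obtain ⟨hopt₁, hopt₂⟩ := slope_balance_of_isMax hdR hRu hR hbs hrf hlf hrg hlg
  have hf_le := hfc.rightSlope_le_leftSlope hrf hlf
  have hg_le := hgc.rightSlope_le_leftSlope hrg hlg
  have hP : 0 < p * (u - R) := mul_pos hp0 (sub_pos.2 hRu)
  have hQ : 0 < (1 - p) * (R - d) := mul_pos (sub_pos.2 hp1) (sub_pos.2 hdR)
  -- `hopt₁`, `hopt₂` make the intervals `p (u - R) [rf, lf]` and `(1 - p) (R - d) [rg, lg]`
  -- overlap, so the larger of their left endpoints lies in both.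
  refine ⟨max (p * (u - R) * rf) ((1 - p) * (R - d) * rg), ?_,
    hfc.le_of_mem_Icc_slopes hrf hlf ⟨?_, ?_⟩, hgc.le_of_mem_Icc_slopes hrg hlg ⟨?_, ?_⟩⟩
  · rcases max_choice (p * (u - R) * rf) ((1 - p) * (R - d) * rg) with h | h <;> rw [h]
    · exact Finset.mem_union_left _ (Finset.mem_image_of_mem _ hrfA)
    · exact Finset.mem_union_right _ (Finset.mem_image_of_mem _ hrgA)
  · rw [le_div_iff₀ hP]
    linarith [le_max_left (p * (u - R) * rf) ((1 - p) * (R - d) * rg)]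
  · rw [div_le_iff₀ hP]
    exact max_le (by nlinarith) (by linarith)
  · rw [le_div_iff₀ hQ]
    linarith [le_max_right (p * (u - R) * rf) ((1 - p) * (R - d) * rg)]
  · rw [div_le_iff₀ hQ]
    exact max_le (by linarith) (by nlinarith)

theorem exists_finset_supergradients_Vfun (hR : 0 < R) (hdR : d < R) (hRu : R < u) (hp0 : 0 < p)
    (hp1 : p < 1) (hf : ClassH f) (hg : ClassH g) :
    ∃ Y : Finset ℝ, ∀ w, ∃ σ ∈ Y, ∀ v, Vfun R u d p f g v ≤ Vfun R u d p f g w + σ * (v - w) := by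
  obtain ⟨Af, hAf⟩ := hf.exists_finset_oneSided_slopes
  obtain ⟨Ag, hAg⟩ := hg.exists_finset_oneSided_slopes
  refine ⟨(Af.image (p * (u - R) * ·) ∪ Ag.image ((1 - p) * (R - d) * ·)).image
    fun ξ => ξ / (u - R) + ξ / (R - d), fun w => ?_⟩
  obtain ⟨bs, hbs⟩ := exists_isMax_Hfun hR hdR hRu hp0.le hp1.le hf hg w
  obtain ⟨ξ, hξ, hqf, hqg⟩ :=
    exists_supergradients_of_isMax hdR hRu hR hp0 hp1 hf.concaveOn hg.concaveOn hAf hAg hbs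
  have huR : u - R ≠ 0 := (sub_pos.2 hRu).ne'
  have hRd : R - d ≠ 0 := (sub_pos.2 hdR).ne'
  have hp1' : 1 - p ≠ 0 := (sub_pos.2 hp1).ne'
  have hσ : p * (ξ / (p * (u - R))) + (1 - p) * (ξ / ((1 - p) * (R - d))) =
      ξ / (u - R) + ξ / (R - d) := by
    field_simp
  refine ⟨_, Finset.mem_image_of_mem _ hξ, fun v => ?_⟩
  rw [Vfun_eq_of_isMax hbs, ← hσ]
  exact ciSup_le fun b => Hfun_le_of_supergradients hR hp0.le hp1.le hqf hqg (by field_simp) v b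

theorem Vfun_eventually_const (hR : 0 < R) (hp0 : 0 ≤ p) (hp1 : p ≤ 1) (hf : ClassH f)
    (hg : ClassH g) : ∃ xb, ∀ w, xb ≤ w → Vfun R u d p f g w = Vfun R u d p f g xb := by
  obtain ⟨xf, hxf⟩ := hf.exists_eventually_const
  obtain ⟨xg, hxg⟩ := hg.exists_eventually_const
  have hV : ∀ w, max xf xg / R ≤ w →
      Vfun R u d p f g w = R⁻¹ * (p * f xf + (1 - p) * g xg) := by
    intro w hw
    have hw' : max xf xg ≤ w * R := (div_le_iff₀ hR).1 hw
    have hfw : f (w * R) = f xf := hxf _ ((le_max_left _ _).trans hw')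
    have hgw : g (w * R) = g xg := hxg _ ((le_max_right _ _).trans hw')
    have hmax : ∀ b, Hfun R u d p f g w b ≤ Hfun R u d p f g w 0 := fun b =>
      Hfun_le_Hfun hR hp0 hp1
        (by simpa [hfw] using (hf.monotone (le_max_left _ xf)).trans_eq (hxf _ (le_max_right _ _)))
        (by simpa [hgw] using (hg.monotone (le_max_left _ xg)).trans_eq (hxg _ (le_max_right _ _)))
    rw [Vfun_eq_of_isMax hmax]
    simp [Hfun, hfw, hgw]
  exact ⟨max xf xg / R, fun w hw => by rw [hV w hw, hV _ le_rfl]⟩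

end DynamicProgramming

/-- Class `H` is preserved by the dynamic programming recursion:
if `f` and `g` belong to class `H`, then so does `V(w) = sup_b H(w,b)`. -/
theorem stmt_13 (R u d p : ℝ) (hd : 0 < d) (hdR : d < R) (hRu : R < u)
    (hp0 : 0 < p) (hp1 : p < 1)
    (f g : ℝ → ℝ) (hf : ClassH f) (hg : ClassH g) :
    ClassH (Vfun R u d p f g) := by
  have hR : 0 < R := hd.trans hdR
  obtain ⟨Y, hY⟩ := exists_finset_supergradients_Vfun hR hdR hRu hp0 hp1 hf hg
  exact classH_of_finite_supergradients Y hY (Vfun_eventually_const hR hp0.le hp1.le hf hg)
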